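/- K-stage unbiasedness of the modified G-estimating equations (population version of Theorem 1): In the setting of the K-stage expected pseudo-outcome identity — sub-σ-algebras 𝓖₁ ⊆ … ⊆ 𝓖_K ⊆ 𝓕, treatment indicators A_j, integrable ν_j, bounded 𝓖_j-measurable C_j, bounded 𝓖_j-measurable π_j with π_j = E[A_j | 𝓖_j] a.e., integrable Y, V_{K+1} = Y, V_j = ν_j + 𝟙{C_j > 0}·C_j, σ-algebras 𝓜_j ⊇ 𝓖_j with E[V_{j+1} | 𝓜_j] = ν_j + A_j·C_j μ-a.e., and pseudo outcomes Ṽ_{K+1} = Y, Ṽ_j = Ṽ_{j+1} + (𝟙{C_j > 0} − π_j)·C_j — additionally assume for each j: a treatment indicator A_j* that is 𝓖_j-measurable (the prescribed treatment), a sub-σ-algebra 𝓖_j° ⊆ 𝓖_j (the σ-algebra σ(H_j*) of the observed history alone), a bounded 𝓖_j°-measurable p_j with p_j = E[A_j* | 𝓖_j°] μ-a.e. (correct treatment-assignment model), and Condition 2: E[ν_j | 𝓖_j] = E[ν_j | 𝓖_j°] μ-a.e. Then for every j = 1, …, K and all bounded 𝓖_j°-measurable random variables λ_j and θ_j, E[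 λ_j·(A_j* − p_j)·(Ṽ_{j+1} − π_j·C_j + θ_j) ] = 0. -/

import Mathlib

open MeasureTheory
open scoped ENNReal

/-!
By backward induction on the stage, `E[Ṽ_{j+1} | 𝓖_j] = E[V_{j+1} | 𝓖_j]`: at each later stage `l`
the Q-function recursion gives `E[V_{l+1} | 𝓖_l] = E[ν_l | 𝓖_l] + π_l C_l`, and the correction
`(𝟙{C_l > 0} − π_l) C_l` in `Ṽ_l` turns the realised term `π_l C_l` into the optimal one
`𝟙{C_l > 0} C_l` of `V_l`. Hence `E[Ṽ_{j+1} − π_j C_j + θ_j | 𝓖_j] = E[ν_j | 𝓖_j] + θ_j`, which by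
Condition 2 is `𝓖_j°`-measurable. Conditioning the estimating function first on `𝓖_j` and then on
`𝓖_j°` leaves the factor `E[A_j* − p_j | 𝓖_j°] = 0`.
-/

section ConditionalExpectation

variable {Ω : Type*} {m mΩ : MeasurableSpace Ω} {μ : Measure Ω}

lemma memLp_top_of_abs_le (hm : m ≤ mΩ) {f : Ω → ℝ} (hf : Measurable[m] f)
    (hb : ∃ M, ∀ ω, |f ω| ≤ M) : MemLp f ∞ μ :=
  let ⟨M, hM⟩ := hb
  memLp_top_of_bound (hf.mono hm le_rfl).aestronglyMeasurable M (ae_of_all _ hM)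

lemma memLp_top_of_eq_zero_or_eq_one (hm : m ≤ mΩ) {f : Ω → ℝ} (hf : Measurable[m] f)
    (h01 : ∀ ω, f ω = 0 ∨ f ω = 1) : MemLp f ∞ μ :=
  memLp_top_of_abs_le hm hf ⟨1, fun ω => by rcases h01 ω with h | h <;> simp [h]⟩

lemma condExp_congr_of_condExp_eq {m₁ m₂ : MeasurableSpace Ω} (h₁₂ : m₁ ≤ m₂) (hm₂ : m₂ ≤ mΩ)
    [SigmaFinite (μ.trim hm₂)] {f g : Ω → ℝ} (h : μ[f|m₂] =ᵐ[μ] μ[g|m₂]) :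
    μ[f|m₁] =ᵐ[μ] μ[g|m₁] :=
  (condExp_condExp_of_le h₁₂ hm₂).symm.trans
    ((condExp_congr_ae h).trans (condExp_condExp_of_le h₁₂ hm₂))

variable [IsFiniteMeasure μ]

lemma condExp_add_of_stronglyMeasurable_right (hm : m ≤ mΩ) {f g : Ω → ℝ}
    (hf : Integrable f μ) (hg : StronglyMeasurable[m] g) (hgi : Integrable g μ) :
    μ[f + g|m] =ᵐ[μ] μ[f|m] + g :=
  (condExp_add hf hgi m).trans (by rw [condExp_of_stronglyMeasurable hm hg hgi])

lemma integral_mul_eq_integral_mul_condExp (hm : m ≤ mΩ) {f g : Ω → ℝ}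
    (hf : StronglyMeasurable[m] f) (hfg : Integrable (f * g) μ) (hg : Integrable g μ) :
    ∫ ω, f ω * g ω ∂μ = ∫ ω, f ω * μ[g|m] ω ∂μ := by
  rw [← integral_condExp hm]
  exact integral_congr_ae (condExp_mul_of_stronglyMeasurable_left hf hfg hg)

lemma integral_mul_sub_eq_zero_of_ae_eq_condExp (hm : m ≤ mΩ) {f a p : Ω → ℝ}
    (hf : StronglyMeasurable[m] f) (hfa : Integrable (f * (a - p)) μ) (ha : Integrable a μ)
    (hpa : p =ᵐ[μ] μ[a|m]) :
    ∫ ω, f ω * (a ω - p ω) ∂μ = 0 := by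
  have hp : Integrable p μ := (integrable_condExp (m := m) (f := a)).congr hpa.symm
  have hcentered : μ[a - p|m] =ᵐ[μ] 0 := by
    filter_upwards [condExp_sub ha hp m, condExp_congr_ae (m := m) hpa,
      condExp_condExp_of_le (f := a) le_rfl hm] with ω h₁ h₂ h₃
    rw [h₁, Pi.sub_apply, h₂, h₃, sub_self, Pi.zero_apply]
  refine (integral_mul_eq_integral_mul_condExp hm hf hfa (ha.sub hp)).trans ?_
  exact integral_eq_zero_of_ae (by filter_upwards [hcentered] with ω h; simp [h])

lemma condExp_of_condExp_eq_add_mul {𝓜 : MeasurableSpace Ω} (hm𝓜 : m ≤ 𝓜) (h𝓜 : 𝓜 ≤ mΩ)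
    {V ν A C π : Ω → ℝ} (hν : Integrable ν μ) (hA : Integrable A μ) (hC : Measurable[m] C)
    (hCb : MemLp C ∞ μ) (hπ : π =ᵐ[μ] μ[A|m]) (hV : μ[V|𝓜] =ᵐ[μ] ν + A * C) :
    μ[V|m] =ᵐ[μ] μ[ν|m] + π * C := by
  have hCA : Integrable (C * A) μ := hA.mul_of_top_right hCb
  calc μ[V|m] =ᵐ[μ] μ[μ[V|𝓜]|m] := (condExp_condExp_of_le hm𝓜 h𝓜).symm
    _ =ᵐ[μ] μ[ν + C * A|m] := condExp_congr_ae (mul_comm A C ▸ hV)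
    _ =ᵐ[μ] μ[ν|m] + μ[C * A|m] := condExp_add hν hCA m
    _ =ᵐ[μ] μ[ν|m] + π * C := by
      filter_upwards [condExp_mul_of_stronglyMeasurable_left hC.stronglyMeasurable hCA hA, hπ]
        with ω h₁ h₂
      rw [Pi.add_apply, Pi.add_apply, h₁, Pi.mul_apply, Pi.mul_apply, h₂, mul_comm]

lemma condExp_add_sub_mul_eq_condExp_add_mul (hm : m ≤ mΩ) {X ν d π C : Ω → ℝ}
    (hX : Integrable X μ) (hν : Integrable ν μ) (hd : Measurable[m] d) (hdb : MemLp d ∞ μ)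
    (hπ : Measurable[m] π) (hπi : Integrable π μ) (hC : Measurable[m] C) (hCb : MemLp C ∞ μ)
    (hXν : μ[X|m] =ᵐ[μ] μ[ν|m] + π * C) :
    μ[X + (d - π) * C|m] =ᵐ[μ] μ[ν + d * C|m] := by
  have hdC : Integrable (d * C) μ := (hdb.integrable le_top).mul_of_top_left hCb
  have hπC : Integrable (π * C) μ := hπi.mul_of_top_left hCb
  rw [sub_mul]
  calc μ[X + (d * C - π * C)|m]
      =ᵐ[μ] μ[X|m] + (d * C - π * C) := condExp_add_of_stronglyMeasurable_right hm hX
        ((hd.mul hC).sub (hπ.mul hC)).stronglyMeasurable (hdC.sub hπC)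
    _ =ᵐ[μ] μ[ν|m] + d * C := by
      filter_upwards [hXν] with ω h
      simp only [Pi.add_apply, Pi.sub_apply, h]
      ring
    _ =ᵐ[μ] μ[ν + d * C|m] := (condExp_add_of_stronglyMeasurable_right hm hν
        (hd.mul hC).stronglyMeasurable hdC).symm

lemma integral_mul_sub_mul_sub_add_eq_zero {m₀ : MeasurableSpace Ω} (hm₀ : m₀ ≤ m) (hm : m ≤ mΩ)
    {lam θ a p X e ν : Ω → ℝ} (hlam : Measurable[m₀] lam) (hlamb : MemLp lam ∞ μ)
    (hθ : Measurable[m₀] θ) (hθb : MemLp θ ∞ μ) (ha : Measurable[m] a) (hab : MemLp a ∞ μ)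
    (hp : Measurable[m₀] p) (hpb : MemLp p ∞ μ) (hpa : p =ᵐ[μ] μ[a|m₀])
    (hX : Integrable X μ) (he : Measurable[m] e) (hei : Integrable e μ)
    (hXe : μ[X|m] =ᵐ[μ] μ[ν|m₀] + e) :
    ∫ ω, lam ω * (a ω - p ω) * (X ω - e ω + θ ω) ∂μ = 0 := by
  have hθi : Integrable θ μ := hθb.integrable le_top
  have hF : Measurable[m] (lam * (a - p)) :=
    (hlam.mono hm₀ le_rfl).mul (ha.sub (hp.mono hm₀ le_rfl))
  have hG : Integrable (X + (θ - e)) μ := hX.add (hθi.sub hei)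
  have hGm : μ[X + (θ - e)|m] =ᵐ[μ] μ[ν|m₀] + θ := by
    filter_upwards [condExp_add_of_stronglyMeasurable_right hm hX
      ((hθ.mono hm₀ le_rfl).sub he).stronglyMeasurable (hθi.sub hei), hXe] with ω h₁ h₂
    simp only [h₁, Pi.add_apply, Pi.sub_apply, h₂]
    ring
  have hH : Integrable (lam * (μ[ν|m₀] + θ)) μ :=
    (integrable_condExp.add hθi).mul_of_top_right hlamb
  calc ∫ ω, lam ω * (a ω - p ω) * (X ω - e ω + θ ω) ∂μ
      = ∫ ω, (lam * (a - p)) ω * (X + (θ - e)) ω ∂μ := by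
        congr 1; ext ω; simp only [Pi.mul_apply, Pi.sub_apply, Pi.add_apply]; ring
    _ = ∫ ω, (lam * (a - p)) ω * μ[X + (θ - e)|m] ω ∂μ :=
        integral_mul_eq_integral_mul_condExp hm hF.stronglyMeasurable
          (hG.mul_of_top_right ((hab.sub hpb).mul hlamb)) hG
    _ = ∫ ω, (lam * (μ[ν|m₀] + θ)) ω * (a ω - p ω) ∂μ := integral_congr_ae (by
        filter_upwards [hGm] with ω h
        simp only [Pi.mul_apply, Pi.sub_apply, h, Pi.add_apply]
        ring)
    _ = 0 := integral_mul_sub_eq_zero_of_ae_eq_condExp (hm₀.trans hm)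
        (hlam.mul (stronglyMeasurable_condExp.measurable.add hθ)).stronglyMeasurable
        (hH.mul_of_top_left (hab.sub hpb)) (hab.integrable le_top) hpa

end ConditionalExpectation

section PseudoOutcomes

variable {Ω : Type*} {mΩ : MeasurableSpace Ω} {μ : Measure Ω} {K : ℕ}

lemma integrable_of_eq_add_succ {f g : ℕ → Ω → ℝ} (htop : Integrable (f (K + 1)) μ)
    (hf : ∀ l, 1 ≤ l → l ≤ K → f l = f (l + 1) + g l)
    (hg : ∀ l, 1 ≤ l → l ≤ K → Integrable (g l) μ) :
    ∀ l, 1 ≤ l → l ≤ K + 1 → Integrable (f l) μ := by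
  intro l hl hlK
  induction hlK using Nat.decreasingInduction with
  | self => exact htop
  | of_succ l hlK ih =>
    rw [hf l hl (Nat.le_of_lt_succ hlK)]
    exact (ih (by omega)).add (hg l hl (Nat.le_of_lt_succ hlK))

lemma condExp_pseudoOutcome_eq_condExp_value [IsFiniteMeasure μ] {𝓖 : ℕ → MeasurableSpace Ω}
    (h𝓖mono : ∀ l, 1 ≤ l → l < K → 𝓖 l ≤ 𝓖 (l + 1)) (h𝓖le : ∀ l, 1 ≤ l → l ≤ K → 𝓖 l ≤ mΩ)
    {V Vt ν d π C : ℕ → Ω → ℝ} (htop : Vt (K + 1) = V (K + 1))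
    (hV : ∀ l, 1 ≤ l → l ≤ K → V l = ν l + d l * C l)
    (hVt : ∀ l, 1 ≤ l → l ≤ K → Vt l = Vt (l + 1) + (d l - π l) * C l)
    (hVti : ∀ l, 1 ≤ l → l ≤ K + 1 → Integrable (Vt l) μ)
    (hν : ∀ l, 1 ≤ l → l ≤ K → Integrable (ν l) μ)
    (hd : ∀ l, 1 ≤ l → l ≤ K → Measurable[𝓖 l] (d l))
    (hdb : ∀ l, 1 ≤ l → l ≤ K → MemLp (d l) ∞ μ)
    (hπ : ∀ l, 1 ≤ l → l ≤ K → Measurable[𝓖 l] (π l))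
    (hπi : ∀ l, 1 ≤ l → l ≤ K → Integrable (π l) μ)
    (hC : ∀ l, 1 ≤ l → l ≤ K → Measurable[𝓖 l] (C l))
    (hCb : ∀ l, 1 ≤ l → l ≤ K → MemLp (C l) ∞ μ)
    (hstage : ∀ l, 1 ≤ l → l ≤ K → μ[V (l + 1)|𝓖 l] =ᵐ[μ] μ[ν l|𝓖 l] + π l * C l) :
    ∀ l, 1 ≤ l → l ≤ K → μ[Vt (l + 1)|𝓖 l] =ᵐ[μ] μ[V (l + 1)|𝓖 l] := by
  intro l hl hlK
  induction hlK using Nat.decreasingInduction with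
  | self => rw [htop]
  | of_succ l hlK ih =>
    have hl' : 1 ≤ l + 1 := by omega
    refine condExp_congr_of_condExp_eq (h𝓖mono l hl hlK) (h𝓖le (l + 1) hl' hlK) ?_
    rw [hVt (l + 1) hl' hlK, hV (l + 1) hl' hlK]
    exact condExp_add_sub_mul_eq_condExp_add_mul (h𝓖le (l + 1) hl' hlK)
      (hVti (l + 2) (by omega) (by omega)) (hν _ hl' hlK) (hd _ hl' hlK) (hdb _ hl' hlK)
      (hπ _ hl' hlK) (hπi _ hl' hlK) (hC _ hl' hlK) (hCb _ hl' hlK)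
      ((ih hl').trans (hstage _ hl' hlK))

end PseudoOutcomes

theorem K_stage_modified_G_estimation_unbiased_general
    {Ω : Type*} {mΩ : MeasurableSpace Ω} (μ : Measure Ω) [IsProbabilityMeasure μ]
    (K : ℕ)
    (𝓖 : ℕ → MeasurableSpace Ω)
    (h𝓖mono : ∀ j, 1 ≤ j → j < K → 𝓖 j ≤ 𝓖 (j + 1)) (h𝓖le : ∀ j, 1 ≤ j → j ≤ K → 𝓖 j ≤ mΩ)
    (A : ℕ → Ω → ℝ) (hA : ∀ j, 1 ≤ j → j ≤ K → Measurable (A j))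
    (hA01 : ∀ j, 1 ≤ j → j ≤ K → ∀ ω, A j ω = 0 ∨ A j ω = 1)
    (ν : ℕ → Ω → ℝ) (hν : ∀ j, 1 ≤ j → j ≤ K → Integrable (ν j) μ)
    (C : ℕ → Ω → ℝ) (hC : ∀ j, 1 ≤ j → j ≤ K → Measurable[𝓖 j] (C j))
    (hCbdd : ∀ j, 1 ≤ j → j ≤ K → ∃ M, ∀ ω, |C j ω| ≤ M)
    (π : ℕ → Ω → ℝ) (hπ : ∀ j, 1 ≤ j → j ≤ K → Measurable[𝓖 j] (π j))
    (hπver : ∀ j, 1 ≤ j → j ≤ K → π j =ᵐ[μ] μ[A j | 𝓖 j])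
    (Y : Ω → ℝ) (hY : Integrable Y μ)
    -- the value functions V_{K+1} = Y and V_j = ν_j + 𝟙{C_j > 0}·C_j
    (V : ℕ → Ω → ℝ) (hVtop : V (K + 1) = Y)
    (hV : ∀ j, 1 ≤ j → j ≤ K →
      V j = fun ω => ν j ω + (if 0 < C j ω then (1 : ℝ) else 0) * C j ω)
    -- Condition 1 together with the stage-j Q-function recursion
    (h𝓜 : ∀ j, 1 ≤ j → j ≤ K → ∃ 𝓜 : MeasurableSpace Ω, 𝓖 j ≤ 𝓜 ∧ 𝓜 ≤ mΩ ∧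
      μ[V (j + 1) | 𝓜] =ᵐ[μ] fun ω => ν j ω + A j ω * C j ω)
    -- the modified pseudo outcomes Ṽ_{K+1} = Y, Ṽ_j = Ṽ_{j+1} + (𝟙{C_j > 0} − π_j)·C_j
    (Vt : ℕ → Ω → ℝ) (hVttop : Vt (K + 1) = Y)
    (hVt : ∀ j, 1 ≤ j → j ≤ K →
      Vt j = fun ω => Vt (j + 1) ω + ((if 0 < C j ω then (1 : ℝ) else 0) - π j ω) * C j ω)
    -- the prescribed treatments A_j*, 𝓖_j-measurable treatment indicators
    (Astar : ℕ → Ω → ℝ) (hAstar : ∀ j, 1 ≤ j → j ≤ K → Measurable[𝓖 j] (Astar j))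
    (hAstar01 : ∀ j, 1 ≤ j → j ≤ K → ∀ ω, Astar j ω = 0 ∨ Astar j ω = 1)
    -- the σ-algebras 𝓖_j° = σ(H_j*) of the observed histories alone
    (𝓖o : ℕ → MeasurableSpace Ω) (h𝓖o : ∀ j, 1 ≤ j → j ≤ K → 𝓖o j ≤ 𝓖 j)
    -- correctly specified treatment-assignment models p_j = P(A_j* = 1 | 𝓖_j°)
    (p : ℕ → Ω → ℝ) (hp : ∀ j, 1 ≤ j → j ≤ K → Measurable[𝓖o j] (p j))
    (hpbdd : ∀ j, 1 ≤ j → j ≤ K → ∃ M, ∀ ω, |p j ω| ≤ M)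
    (hpver : ∀ j, 1 ≤ j → j ≤ K → p j =ᵐ[μ] μ[Astar j | 𝓖o j])
    -- Condition 2: E[ν_j | 𝓖_j] = E[ν_j | 𝓖_j°]
    (hcond2 : ∀ j, 1 ≤ j → j ≤ K → μ[ν j | 𝓖 j] =ᵐ[μ] μ[ν j | 𝓖o j]) :
    ∀ j, 1 ≤ j → j ≤ K → ∀ lam θ : Ω → ℝ,
      Measurable[𝓖o j] lam → Measurable[𝓖o j] θ →
      (∃ M, ∀ ω, |lam ω| ≤ M) → (∃ M, ∀ ω, |θ ω| ≤ M) →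
      ∫ ω, lam ω * (Astar j ω - p j ω) * (Vt (j + 1) ω - π j ω * C j ω + θ ω) ∂μ = 0 := by
  intro j hj hjK lam θ hlam hθ hlamb hθb
  have hd : ∀ l, 1 ≤ l → l ≤ K → Measurable[𝓖 l] fun ω => if 0 < C l ω then (1 : ℝ) else 0 :=
    fun l hl hlK =>
      Measurable.ite (measurableSet_lt measurable_const (hC l hl hlK)) measurable_const
        measurable_const
  have hdb : ∀ l, 1 ≤ l → l ≤ K → MemLp (fun ω => if 0 < C l ω then (1 : ℝ) else 0) ∞ μ :=
    fun l hl hlK => memLp_top_of_eq_zero_or_eq_one (h𝓖le l hl hlK) (hd l hl hlK)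
      fun ω => by split_ifs <;> simp
  have hCb : ∀ l, 1 ≤ l → l ≤ K → MemLp (C l) ∞ μ := fun l hl hlK =>
    memLp_top_of_abs_le (h𝓖le l hl hlK) (hC l hl hlK) (hCbdd l hl hlK)
  have hπi : ∀ l, 1 ≤ l → l ≤ K → Integrable (π l) μ := fun l hl hlK =>
    integrable_condExp.congr (hπver l hl hlK).symm
  have hVti : ∀ l, 1 ≤ l → l ≤ K + 1 → Integrable (Vt l) μ :=
    integrable_of_eq_add_succ (hVttop ▸ hY) hVt fun l hl hlK =>
      (((hdb l hl hlK).integrable le_top).sub (hπi l hl hlK)).mul_of_top_left (hCb l hl hlK)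
  have hstage : ∀ l, 1 ≤ l → l ≤ K → μ[V (l + 1)|𝓖 l] =ᵐ[μ] μ[ν l|𝓖 l] + π l * C l := by
    intro l hl hlK
    obtain ⟨𝓜, hm𝓜, h𝓜, hV𝓜⟩ := h𝓜 l hl hlK
    exact condExp_of_condExp_eq_add_mul hm𝓜 h𝓜 (hν l hl hlK)
      ((memLp_top_of_eq_zero_or_eq_one le_rfl (hA l hl hlK) (hA01 l hl hlK)).integrable le_top)
      (hC l hl hlK) (hCb l hl hlK) (hπver l hl hlK) hV𝓜
  have hkey := condExp_pseudoOutcome_eq_condExp_value h𝓖mono h𝓖le (hVttop.trans hVtop.symm) hV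
    hVt hVti hν hd hdb hπ hπi hC hCb hstage j hj hjK
  have h𝓖o_le := (h𝓖o j hj hjK).trans (h𝓖le j hj hjK)
  exact integral_mul_sub_mul_sub_add_eq_zero (h𝓖o j hj hjK) (h𝓖le j hj hjK)
    hlam (memLp_top_of_abs_le h𝓖o_le hlam hlamb) hθ (memLp_top_of_abs_le h𝓖o_le hθ hθb)
    (hAstar j hj hjK)
    (memLp_top_of_eq_zero_or_eq_one (h𝓖le j hj hjK) (hAstar j hj hjK) (hAstar01 j hj hjK))
    (hp j hj hjK) (memLp_top_of_abs_le h𝓖o_le (hp j hj hjK) (hpbdd j hj hjK)) (hpver j hj hjK)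
    (hVti (j + 1) (by omega) (by omega)) ((hπ j hj hjK).mul (hC j hj hjK))
    ((hπi j hj hjK).mul_of_top_left (hCb j hj hjK))
    (hkey.trans ((hstage j hj hjK).trans ((hcond2 j hj hjK).add .rfl)))

/-- K-stage unbiasedness of the modified G-estimating equations (the population
version of Theorem 1 of the paper): at every stage `j`, for all bounded
`σ(H_j*)`-measurable `λ_j` and `θ_j`,
`E[λ_j·(A_j* − p_j)·(Ṽ_{j+1} − π_j·C_j + θ_j)] = 0`. -/
theorem K_stage_modified_G_estimation_unbiased
    {Ω : Type*} {mΩ : MeasurableSpace Ω} (μ : Measure Ω) [IsProbabilityMeasure μ]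
    (K : ℕ) (hK : 1 ≤ K)
    (𝓖 : ℕ → MeasurableSpace Ω)
    (h𝓖mono : ∀ j, 1 ≤ j → j < K → 𝓖 j ≤ 𝓖 (j + 1)) (h𝓖le : ∀ j, 1 ≤ j → j ≤ K → 𝓖 j ≤ mΩ)
    (A : ℕ → Ω → ℝ) (hA : ∀ j, 1 ≤ j → j ≤ K → Measurable (A j))
    (hA01 : ∀ j, 1 ≤ j → j ≤ K → ∀ ω, A j ω = 0 ∨ A j ω = 1)
    (ν : ℕ → Ω → ℝ) (hν : ∀ j, 1 ≤ j → j ≤ K → Integrable (ν j) μ)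
    (C : ℕ → Ω → ℝ) (hC : ∀ j, 1 ≤ j → j ≤ K → Measurable[𝓖 j] (C j))
    (hCbdd : ∀ j, 1 ≤ j → j ≤ K → ∃ M, ∀ ω, |C j ω| ≤ M)
    (π : ℕ → Ω → ℝ) (hπ : ∀ j, 1 ≤ j → j ≤ K → Measurable[𝓖 j] (π j))
    (hπbdd : ∀ j, 1 ≤ j → j ≤ K → ∃ M, ∀ ω, |π j ω| ≤ M)
    (hπver : ∀ j, 1 ≤ j → j ≤ K → π j =ᵐ[μ] μ[A j | 𝓖 j])
    (Y : Ω → ℝ) (hY : Integrable Y μ)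
    -- the value functions V_{K+1} = Y and V_j = ν_j + 𝟙{C_j > 0}·C_j
    (V : ℕ → Ω → ℝ) (hVtop : V (K + 1) = Y)
    (hV : ∀ j, 1 ≤ j → j ≤ K →
      V j = fun ω => ν j ω + (if 0 < C j ω then (1 : ℝ) else 0) * C j ω)
    -- Condition 1 together with the stage-j Q-function recursion
    (h𝓜 : ∀ j, 1 ≤ j → j ≤ K → ∃ 𝓜 : MeasurableSpace Ω, 𝓖 j ≤ 𝓜 ∧ 𝓜 ≤ mΩ ∧
      μ[V (j + 1) | 𝓜] =ᵐ[μ] fun ω => ν j ω + A j ω * C j ω)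
    -- the modified pseudo outcomes Ṽ_{K+1} = Y, Ṽ_j = Ṽ_{j+1} + (𝟙{C_j > 0} − π_j)·C_j
    (Vt : ℕ → Ω → ℝ) (hVttop : Vt (K + 1) = Y)
    (hVt : ∀ j, 1 ≤ j → j ≤ K →
      Vt j = fun ω => Vt (j + 1) ω + ((if 0 < C j ω then (1 : ℝ) else 0) - π j ω) * C j ω)
    -- the prescribed treatments A_j*, 𝓖_j-measurable treatment indicators
    (Astar : ℕ → Ω → ℝ) (hAstar : ∀ j, 1 ≤ j → j ≤ K → Measurable[𝓖 j] (Astar j))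
    (hAstar01 : ∀ j, 1 ≤ j → j ≤ K → ∀ ω, Astar j ω = 0 ∨ Astar j ω = 1)
    -- the σ-algebras 𝓖_j° = σ(H_j*) of the observed histories alone
    (𝓖o : ℕ → MeasurableSpace Ω) (h𝓖o : ∀ j, 1 ≤ j → j ≤ K → 𝓖o j ≤ 𝓖 j)
    -- correctly specified treatment-assignment models p_j = P(A_j* = 1 | 𝓖_j°)
    (p : ℕ → Ω → ℝ) (hp : ∀ j, 1 ≤ j → j ≤ K → Measurable[𝓖o j] (p j))
    (hpbdd : ∀ j, 1 ≤ j → j ≤ K → ∃ M, ∀ ω, |p j ω| ≤ M)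
    (hpver : ∀ j, 1 ≤ j → j ≤ K → p j =ᵐ[μ] μ[Astar j | 𝓖o j])
    -- Condition 2: E[ν_j | 𝓖_j] = E[ν_j | 𝓖_j°]
    (hcond2 : ∀ j, 1 ≤ j → j ≤ K → μ[ν j | 𝓖 j] =ᵐ[μ] μ[ν j | 𝓖o j]) :
    ∀ j, 1 ≤ j → j ≤ K → ∀ lam θ : Ω → ℝ,
      Measurable[𝓖o j] lam → Measurable[𝓖o j] θ →
      (∃ M, ∀ ω, |lam ω| ≤ M) → (∃ M, ∀ ω, |θ ω| ≤ M) →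
      ∫ ω, lam ω * (Astar j ω - p j ω) * (Vt (j + 1) ω - π j ω * C j ω + θ ω) ∂μ = 0 :=
  K_stage_modified_G_estimation_unbiased_general μ K 𝓖 h𝓖mono h𝓖le A hA hA01 ν hν C hC hCbdd π hπ
    hπver Y hY V hVtop hV h𝓜 Vt hVttop hVt Astar hAstar hAstar01 𝓖o h𝓖o p hp hpbdd hpver hcond2
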